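/- arXiv:1606.00502 — 2 statements merged into one kernel-verified Lean document; each statement's English description precedes it below -/
import Mathlib

section
/- Let R be a specification on a set S and let P be a relation on S that is correct with respect to R (i.e., P refines R). Then P is more-correct with respect to R than every relation Q on S, i.e., dom(R ∩ Q) ⊆ dom(R ∩ P) for every relation Q on S. -/
/-- The domain of a relation on `S`. -/
def dom {S : Type*} (R : Set (S × S)) : Set S := {s | ∃ s', (s, s') ∈ R}

/-- `refines R' R`: the relation `R'` refines the relation `R`. -/
def refines {S : Type*} (R' R : Set (S × S)) : Prop :=
  (dom R ×ˢ (Set.univ : Set S)) ∩ (dom R' ×ˢ (Set.univ : Set S)) ∩ (R ∪ R') = R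

/-- A relation is deterministic (a function). -/
def deterministic {S : Type*} (P : Set (S × S)) : Prop :=
  ∀ s s' s'', (s, s') ∈ P → (s, s'') ∈ P → s' = s''

/-!
If `P` refines `R`, then `P` is defined wherever `R` is, and on `dom R` every output of `P` is
allowed by `R`. Hence `dom (R ∩ P) = dom R`, which contains `dom (R ∩ Q)` for any `Q`.
-/

section Refines

variable {S : Type*} {R P : Set (S × S)}

theorem dom_mono {Q Q' : Set (S × S)} (h : Q ⊆ Q') : dom Q ⊆ dom Q' :=
  fun _ ⟨t, ht⟩ => ⟨t, h ht⟩

theorem dom_subset_of_refines (hP : refines P R) : dom R ⊆ dom P := by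
  rintro s ⟨t, hst⟩
  rw [← hP] at hst
  exact hst.1.2.1

theorem mem_of_refines (hP : refines P R) {s t : S} (hs : s ∈ dom R) (hst : (s, t) ∈ P) :
    (s, t) ∈ R := by
  rw [← hP]
  exact ⟨⟨⟨hs, trivial⟩, ⟨t, hst⟩, trivial⟩, Or.inr hst⟩

theorem dom_inter_eq_of_refines (hP : refines P R) : dom (R ∩ P) = dom R := by
  refine (dom_mono Set.inter_subset_left).antisymm fun s hs => ?_
  obtain ⟨t, hst⟩ := dom_subset_of_refines hP hs
  exact ⟨t, mem_of_refines hP hs hst, hst⟩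

end Refines

/-- A program that is correct with respect to `R` is more-correct with respect to
`R` than every relation `Q`. -/
theorem stmt_6 {S : Type*} (R P : Set (S × S)) (hP : refines P R) :
    ∀ Q : Set (S × S), dom (R ∩ Q) ⊆ dom (R ∩ P) := by
  intro Q
  rw [dom_inter_eq_of_refines hP]
  exact dom_mono Set.inter_subset_left
end

section
/- Let R be a specification on a set S and let f : S → S be a (total, deterministic) program with graph P = {(s, f(s)) | s ∈ S}. Then f passes the absolute-correctness oracle on every input, i.e., Ω(s, f(s)) holds for all s ∈ S where Ω(s,s') ≡ (s ∈ dom(R) ⇒ (s,s') ∈ R), if and only if P is correct with respect to R (P refines R). -/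
section Refinement

variable {S : Type*}

theorem mem_dom_of_mem {R : Set (S × S)} {s s' : S} (h : (s, s') ∈ R) : s ∈ dom R :=
  ⟨s', h⟩

theorem refines_iff {R' R : Set (S × S)} :
    refines R' R ↔ dom R ⊆ dom R' ∧ ∀ s s', s ∈ dom R → (s, s') ∈ R' → (s, s') ∈ R := by
  constructor
  · intro h
    refine ⟨fun s hs => ?_, fun s s' hs hR' => ?_⟩
    · obtain ⟨s', hR⟩ := hs
      rw [← h] at hR
      exact hR.1.2.1
    · rw [← h]
      exact ⟨⟨⟨hs, trivial⟩, ⟨mem_dom_of_mem hR', trivial⟩⟩, Or.inr hR'⟩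
  · rintro ⟨hdom, hout⟩
    apply Set.Subset.antisymm
    · rintro ⟨s, s'⟩ ⟨⟨⟨hs, -⟩, -⟩, hR | hR'⟩
      · exact hR
      · exact hout s s' hs hR'
    · rintro ⟨s, s'⟩ hR
      have hs : s ∈ dom R := mem_dom_of_mem hR
      exact ⟨⟨⟨hs, trivial⟩, ⟨hdom hs, trivial⟩⟩, Or.inl hR⟩

theorem dom_graph (f : S → S) : dom {p : S × S | p.2 = f p.1} = Set.univ :=
  Set.eq_univ_of_forall fun s => ⟨f s, rfl⟩

theorem refines_graph_iff (f : S → S) (R : Set (S × S)) :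
    refines {p : S × S | p.2 = f p.1} R ↔ ∀ s, s ∈ dom R → (s, f s) ∈ R := by
  rw [refines_iff, dom_graph]
  refine ⟨fun h s hs => h.2 s (f s) hs rfl, fun h => ⟨Set.subset_univ _, ?_⟩⟩
  rintro s s' hs (hs' : s' = f s)
  exact hs' ▸ h s hs

end Refinement

/-- A total deterministic program `f` passes the absolute-correctness oracle
`Ω(s,s') ≡ (s ∈ dom R ⇒ (s,s') ∈ R)` on every input iff its graph `P` is
correct with respect to `R`. -/
theorem stmt_9 {S : Type*} (R : Set (S × S)) (f : S → S)
    (P : Set (S × S)) (hP : P = {p : S × S | p.2 = f p.1}) :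
    (∀ s : S, s ∈ dom R → (s, f s) ∈ R) ↔ refines P R := by
  rw [hP, refines_graph_iff]
end
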